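/- Let λ = (λ₁,…,λ_d) be a partition with λ₁ ≥ ⋯ ≥ λ_d ≥ 1 and Σλ_i = k₀, and let k ≥ k₀. Then the generalized Dicke state D_{λ,k} ∈ (ℂ^{d+1})^{⊗k} (the sum over all words in {0,…,d}^k containing the letter i exactly λ_i times for 1 ≤ i ≤ d and the letter 0 at the remaining k−k₀ positions) has border rank at most (λ₁+1)(λ₂+1)⋯(λ_d+1). -/
import Mathlib


open scoped BigOperators

/-- The generalized Dicke state D_{λ,k} ∈ (ℂ^{d+1})^{⊗k}: sum over all words in
{0,…,d}^k containing the letter i exactly λ_i times for 1 ≤ i ≤ d. -/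
noncomputable def genDicke {d : ℕ} (lam : Fin d → ℕ) (k : ℕ) :
    ((_ : Fin k) → Fin (d + 1)) → ℂ :=
  fun v => if ∀ t : Fin d, (Finset.univ.filter fun j => v j = Fin.succ t).card = lam t
    then 1 else 0

/-- A tensor on (ℂ^{d+1})^{⊗k} has rank at most r. -/
def rankLE {d k : ℕ} (T : ((_ : Fin k) → Fin (d + 1)) → ℂ) (r : ℕ) : Prop :=
  ∃ u : Fin r → Fin k → Fin (d + 1) → ℂ, ∀ v, T v = ∑ s : Fin r, ∏ i, u s i (v i)


lemma exists_coeffs (n : ℕ) : ∃ c : Fin (n + 1) → ℂ,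
    ∀ m : ℕ, m ≤ n → ∑ a : Fin (n + 1), c a * ((a : ℕ) : ℂ) ^ m = if m = n then 1 else 0 := by
  classical
  set M : Matrix (Fin (n + 1)) (Fin (n + 1)) ℂ :=
    Matrix.of (fun m a : Fin (n + 1) => ((a : ℕ) : ℂ) ^ (m : ℕ)) with hM
  have hdet : IsUnit M.det := by
    have hMt : M = (Matrix.vandermonde fun a : Fin (n + 1) => ((a : ℕ) : ℂ)).transpose := by
      ext i j; simp [hM, Matrix.vandermonde, Matrix.transpose_apply]
    rw [hMt, Matrix.det_transpose, Matrix.det_vandermonde]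
    refine isUnit_iff_ne_zero.2 (Finset.prod_ne_zero_iff.2 fun i _ => ?_)
    refine Finset.prod_ne_zero_iff.2 fun j hj => ?_
    have hij : i < j := Finset.mem_Ioi.1 hj
    have : ((i : ℕ) : ℂ) ≠ ((j : ℕ) : ℂ) := by
      exact_mod_cast Nat.ne_of_lt (Fin.lt_iff_val_lt_val.1 hij)
    exact sub_ne_zero.2 (Ne.symm this)
  refine ⟨M⁻¹.mulVec (Pi.single (Fin.last n) 1), fun m hm => ?_⟩
  have h2 : M.mulVec (M⁻¹.mulVec (Pi.single (Fin.last n) 1)) = Pi.single (Fin.last n) 1 := by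
    rw [Matrix.mulVec_mulVec, Matrix.mul_nonsing_inv _ hdet, Matrix.one_mulVec]
  have h3 := congrFun h2 ⟨m, Nat.lt_succ_of_le hm⟩
  have hlhs : M.mulVec (M⁻¹.mulVec (Pi.single (Fin.last n) 1)) ⟨m, Nat.lt_succ_of_le hm⟩
      = ∑ a : Fin (n + 1), M⁻¹.mulVec (Pi.single (Fin.last n) 1) a * ((a : ℕ) : ℂ) ^ m := by
    simp [Matrix.mulVec, dotProduct, hM, mul_comm]
  rw [hlhs] at h3
  rw [h3, Pi.single_apply]
  congr 1
  simp [Fin.ext_iff, Fin.last]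

lemma prod_comp_count {k N : ℕ} (v : Fin k → Fin N) (f : Fin N → ℂ) :
    ∏ j, f (v j) = ∏ x, f x ^ (Finset.univ.filter fun j => v j = x).card := by
  classical
  rw [← Finset.prod_fiberwise_of_maps_to (fun j _ => Finset.mem_univ (v j)) (fun j => f (v j))]
  refine Finset.prod_congr rfl fun x _ => ?_
  rw [Finset.prod_congr rfl (fun j hj => by rw [(Finset.mem_filter.1 hj).2]), Finset.prod_const]

/-- The border rank of D_{λ,k} is at most (λ₁+1)⋯(λ_d+1). -/
theorem genDicke_border_rank_le {d : ℕ} (lam : Fin d → ℕ)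
    (hmono : Antitone lam) (hpos : ∀ i, 1 ≤ lam i)
    (k : ℕ) (hk : (∑ i, lam i) ≤ k) :
    ∃ f : ℕ → (((_ : Fin k) → Fin (d + 1)) → ℂ),
      (∀ s, rankLE (f s) (∏ i, (lam i + 1))) ∧
      Filter.Tendsto f Filter.atTop (nhds (genDicke lam k)) := by
  classical
  rcases Nat.eq_zero_or_pos d with hd | hd
  · subst hd
    refine ⟨fun _ => genDicke lam k, fun s => ⟨fun _ _ _ => 1, fun v => ?_⟩, tendsto_const_nhds⟩
    simp [genDicke]
  · -- d ≥ 1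
    have hdk : d ≤ ∑ i, lam i := by
      calc d = ∑ _i : Fin d, 1 := by simp
        _ ≤ ∑ i, lam i := Finset.sum_le_sum fun i _ => hpos i
    have hk1 : 0 < k := lt_of_lt_of_le (lt_of_lt_of_le hd hdk) hk
    set k0 := ∑ i, lam i with hk0def
    choose c hc using fun i : Fin d => exists_coeffs (lam i)
    set η : ℕ → ℂ := fun s => ((s : ℂ) + 1)⁻¹ with hηdef
    have hηne : ∀ s, η s ≠ 0 := fun s => inv_ne_zero (Nat.cast_add_one_ne_zero s)
    set S : Fin d → ℕ → ℂ := fun t m => ∑ b : Fin (lam t + 1), c t b * ((b : ℕ) : ℂ) ^ m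
      with hSdef
    set m : ((_ : Fin k) → Fin (d + 1)) → Fin d → ℕ :=
      fun v t => (Finset.univ.filter fun j => v j = Fin.succ t).card with hmdef
    set scal : ℂ → (∀ i : Fin d, Fin (lam i + 1)) → ℂ :=
      fun e a => (e⁻¹) ^ k0 * ∏ t, c t (a t) with hscaldef
    set base : ℂ → (∀ i : Fin d, Fin (lam i + 1)) → Fin (d + 1) → ℂ :=
      fun e a x => Fin.cases 1 (fun t => e * ((a t : ℕ) : ℂ)) x with hbasedef
    set F : ℂ → ((_ : Fin k) → Fin (d + 1)) → ℂ :=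
      fun e v => ∑ a : ∀ i : Fin d, Fin (lam i + 1), scal e a * ∏ j, base e a (v j) with hFdef
    have key : ∀ (e : ℂ) v,
        F e v = (e⁻¹) ^ k0 * e ^ (∑ t, m v t) * ∏ t, S t (m v t) := by
      intro e v
      have h1 : ∀ a : ∀ i : Fin d, Fin (lam i + 1),
          (∏ j, base e a (v j)) = e ^ (∑ t, m v t) * ∏ t, ((a t : ℕ) : ℂ) ^ (m v t) := by
        intro a
        rw [prod_comp_count v (base e a), Fin.prod_univ_succ]
        have h0 : base e a 0 = 1 := rfl
        have hsucc : ∀ t : Fin d, base e a (Fin.succ t) = e * ((a t : ℕ) : ℂ) := fun t => rfl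
        rw [h0, one_pow, one_mul]
        calc ∏ t : Fin d, base e a (Fin.succ t) ^ (Finset.univ.filter fun j => v j = Fin.succ t).card
            = ∏ t : Fin d, (e ^ (m v t) * ((a t : ℕ) : ℂ) ^ (m v t)) := by
              refine Finset.prod_congr rfl fun t _ => ?_
              rw [hsucc, mul_pow]
          _ = e ^ (∑ t, m v t) * ∏ t, ((a t : ℕ) : ℂ) ^ (m v t) := by
              rw [Finset.prod_mul_distrib, Finset.prod_pow_eq_pow_sum]
      calc F e v = ∑ a : ∀ i : Fin d, Fin (lam i + 1),
            (e⁻¹) ^ k0 * e ^ (∑ t, m v t) * ∏ t, (c t (a t) * ((a t : ℕ) : ℂ) ^ (m v t)) := by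
            refine Finset.sum_congr rfl fun a _ => ?_
            rw [h1 a]
            simp only [hscaldef, Finset.prod_mul_distrib]
            ring
        _ = (e⁻¹) ^ k0 * e ^ (∑ t, m v t) *
              ∑ a : ∀ i : Fin d, Fin (lam i + 1), ∏ t, (c t (a t) * ((a t : ℕ) : ℂ) ^ (m v t)) := by
            rw [← Finset.mul_sum]
        _ = (e⁻¹) ^ k0 * e ^ (∑ t, m v t) * ∏ t, S t (m v t) := by
            rw [← Fintype.prod_sum (fun (t : Fin d) (b : Fin (lam t + 1)) =>
              c t b * ((b : ℕ) : ℂ) ^ (m v t))]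
    refine ⟨fun s => F (η s), fun s => ?_, ?_⟩
    · -- rankLE
      have hcard : Fintype.card (∀ i : Fin d, Fin (lam i + 1)) = ∏ i, (lam i + 1) := by
        simp [Fintype.card_pi]
      set e := Fintype.equivFinOfCardEq hcard with hedef
      refine ⟨fun s' j x =>
        (if j = (⟨0, hk1⟩ : Fin k) then scal (η s) (e.symm s') else 1) * base (η s) (e.symm s') x,
        fun v => ?_⟩
      have : ∀ s' : Fin (∏ i, (lam i + 1)),
          (∏ j, (if j = (⟨0, hk1⟩ : Fin k) then scal (η s) (e.symm s') else 1)
              * base (η s) (e.symm s') (v j))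
          = scal (η s) (e.symm s') * ∏ j, base (η s) (e.symm s') (v j) := by
        intro s'
        rw [Finset.prod_mul_distrib, Fintype.prod_ite_eq']
      simp only [this, hFdef]
      exact (Equiv.sum_comp e.symm fun a => scal (η s) a * ∏ j, base (η s) a (v j)).symm
    · -- tendsto
      rw [tendsto_pi_nhds]
      intro v
      by_cases hall : ∀ t, m v t = lam t
      · have hgd : genDicke lam k v = 1 := if_pos hall
        have hF : ∀ s, F (η s) v = 1 := by
          intro s
          rw [key]
          have hsum : (∑ t, m v t) = k0 := by
            rw [hk0def]; exact Finset.sum_congr rfl fun t _ => hall t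
          have hprod : (∏ t, S t (m v t)) = 1 := by
            refine Finset.prod_eq_one fun t _ => ?_
            rw [hall t]
            simp only [hSdef]
            rw [hc t (lam t) le_rfl, if_pos rfl]
          rw [hsum, hprod, mul_one, ← mul_pow, inv_mul_cancel₀ (hηne s), one_pow]
        rw [hgd]
        simpa only [hF] using (tendsto_const_nhds : Filter.Tendsto (fun _ : ℕ => (1:ℂ)) _ _)
      · have hgd : genDicke lam k v = 0 := if_neg hall
        rw [hgd]
        by_cases hge : ∀ t, lam t ≤ m v t
        · obtain ⟨t0, ht0⟩ := not_forall.1 hall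
          have ht0' : lam t0 < m v t0 := lt_of_le_of_ne (hge t0) (Ne.symm ht0)
          have hKgt : k0 < ∑ t, m v t := by
            rw [hk0def]
            exact Finset.sum_lt_sum (fun i _ => hge i) ⟨t0, Finset.mem_univ t0, ht0'⟩
          have hF : ∀ s, F (η s) v = (η s) ^ (∑ t, m v t - k0) * ∏ t, S t (m v t) := by
            intro s
            rw [key]
            congr 1
            conv_lhs => rw [show (∑ t, m v t) = k0 + (∑ t, m v t - k0) from by omega]
            rw [pow_add, ← mul_assoc, ← mul_pow, inv_mul_cancel₀ (hηne s), one_pow, one_mul]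
          simp only [hF]
          have hη0 : Filter.Tendsto η Filter.atTop (nhds 0) := by
            have h1 : Filter.Tendsto (fun s : ℕ => ((s : ℝ) + 1)) Filter.atTop Filter.atTop :=
              Filter.tendsto_atTop_add_const_right _ 1 tendsto_natCast_atTop_atTop
            have h2 : Filter.Tendsto (fun s : ℕ => ((s : ℝ) + 1)⁻¹) Filter.atTop (nhds 0) :=
              h1.inv_tendsto_atTop
            have h3 := (Complex.continuous_ofReal.tendsto 0).comp h2
            have heq : (Complex.ofReal ∘ fun s : ℕ => ((s : ℝ) + 1)⁻¹) = η := by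
              funext s
              simp [hηdef, Function.comp]
            rwa [heq] at h3
          have := (hη0.pow (∑ t, m v t - k0)).mul_const (∏ t, S t (m v t))
          rw [zero_pow (by omega : (∑ t, m v t - k0) ≠ 0), zero_mul] at this
          exact this
        · push_neg at hge
          obtain ⟨t0, ht0⟩ := hge
          have hS0 : S t0 (m v t0) = 0 := by
            simp only [hSdef]
            rw [hc t0 (m v t0) (le_of_lt ht0), if_neg (Nat.ne_of_lt ht0)]
          have hF : ∀ s, F (η s) v = 0 := by
            intro s
            rw [key, Finset.prod_eq_zero (Finset.mem_univ t0) hS0, mul_zero]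
          simpa only [hF] using (tendsto_const_nhds : Filter.Tendsto (fun _ : ℕ => (0:ℂ)) _ _)
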